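/- arXiv:2411.07966 — 8 statements merged into one kernel-verified Lean document; each statement's English description precedes it below -/
import Mathlib

section
/- Let F be a field, let n, d be natural numbers, let P be a multivariate polynomial in MvPolynomial (Fin n) F whose individual degree in every variable is at most d (degreeOf i P ≤ d for all i), and let S be a finite subset of F. If there exists a point a : Fin n → F with eval a P ≠ 0 (i.e. not every point of F^n is a root of P), then the number of points b : Fin n → F with b i ∈ S for all i and eval b P = 0 is at most d · n · |S|^(n−1). -/
/-! The fraction of the cube `S ^ n` on which a nonzero polynomial vanishes is at most
`∑ i, degᵢ p / #S ≤ n * d / #S` (Schwartz–Zippel, per-variable form); clearing the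
denominator `#S ^ n` gives the bound. -/

open MvPolynomial

open Finset in
theorem MvPolynomial.schwartz_zippel_of_degreeOf_le
    {R : Type*} [CommRing R] [IsDomain R] [DecidableEq R] {n d : ℕ}
    {p : MvPolynomial (Fin n) R} (hp : p ≠ 0) (hdeg : ∀ i, p.degreeOf i ≤ d) (S : Finset R) :
    #{x ∈ Fintype.piFinset fun _ ↦ S | eval x p = 0} ≤ d * n * #S ^ (n - 1) := by
  have hfrac : (#{x ∈ Fintype.piFinset fun _ ↦ S | eval x p = 0} : ℚ≥0) / #S ^ n ≤ n * d / #S :=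
    calc
      _ = (#{x ∈ Fintype.piFinset fun _ ↦ S | eval x p = 0} : ℚ≥0) / ∏ _ : Fin n, (#S : ℚ≥0) := by
        simp
      _ ≤ ∑ i, (p.degreeOf i / #S : ℚ≥0) := schwartz_zippel_sum_degreeOf hp _
      _ ≤ ∑ _ : Fin n, (d / #S : ℚ≥0) := by gcongr with i; exact_mod_cast hdeg i
      _ = n * d / #S := by simp [mul_div_assoc]
  obtain _ | m := n
  · simpa using hfrac
  obtain rfl | hS := S.eq_empty_or_nonempty
  · simp
  have hS : (0 : ℚ≥0) < #S := by exact_mod_cast hS.card_pos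
  rw [div_le_iff₀ (by positivity)] at hfrac
  have hclear : ((m + 1 : ℕ) : ℚ≥0) * d / #S * #S ^ (m + 1) = d * (m + 1 : ℕ) * #S ^ m := by
    field_simp
    ring
  exact_mod_cast hfrac.trans hclear.le

theorem schwartz_zippel_individual_degree
    (F : Type*) [Field F] [DecidableEq F] (n d : ℕ)
    (P : MvPolynomial (Fin n) F) (hdeg : ∀ i : Fin n, P.degreeOf i ≤ d)
    (S : Finset F) (a : Fin n → F) (ha : eval a P ≠ 0) :
    ((Fintype.piFinset fun _ : Fin n => S).filter
      (fun b => eval b P = 0)).card ≤ d * n * S.card ^ (n - 1) :=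
  schwartz_zippel_of_degreeOf_le (by rintro rfl; simp at ha) hdeg S
end

section
/- Let n, d, q be natural numbers with q ≥ 1, let P ∈ MvPolynomial (Fin n) ℤ satisfy degreeOf i P ≤ d for all i, and let a : Fin n → ℤ satisfy eval a P ≠ 0. Let Z be the finite set of points b : Fin n → ℤ lying in the grid S_q^n with eval b P = 0. Then there exists an injection from Z into Fin n × Fin d × (Fin (n−1) → Fin q); in particular, the cardinality of Z is at most n · d · q^(n−1). -/
open MvPolynomial

/-!
Schwartz–Zippel with individual degrees: a nonzero `P` with `degreeOf i P ≤ d` vanishes on at most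
a fraction `∑ i, d / q = n d / q` of the grid `S_q^n`, i.e. at most `n d q^(n-1)` of its points.
The injection then exists because `Fin n × Fin d × (Fin (n-1) → Fin q)` has exactly that many
elements.
-/

open Finset in
theorem MvPolynomial.card_zeros_piFinset_le_of_degreeOf_le {R : Type*} [CommRing R] [IsDomain R]
    [DecidableEq R] {n d : ℕ} {p : MvPolynomial (Fin n) R} (hp : p ≠ 0)
    (hdeg : ∀ i, p.degreeOf i ≤ d) {S : Finset R} (hS : S.Nonempty) :
    #{x ∈ Fintype.piFinset fun _ : Fin n ↦ S | eval x p = 0} ≤ n * d * #S ^ (n - 1) := by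
  set c := #{x ∈ Fintype.piFinset fun _ : Fin n ↦ S | eval x p = 0}
  have hs : (0 : ℚ≥0) < #S := by exact_mod_cast hS.card_pos
  have hfrac : (c : ℚ≥0) / #S ^ n ≤ n * d / #S :=
    calc (c : ℚ≥0) / #S ^ n = c / ∏ _i : Fin n, (#S : ℚ≥0) := by simp
      _ ≤ ∑ i, (p.degreeOf i / #S : ℚ≥0) := schwartz_zippel_sum_degreeOf hp _
      _ ≤ ∑ _i : Fin n, (d / #S : ℚ≥0) := by gcongr with i; exact_mod_cast hdeg i
      _ = n * d / #S := by simp [mul_div_assoc]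
  rw [div_le_div_iff₀ (pow_pos hs n) hs] at hfrac
  have hc : (c : ℚ≥0) ≤ n * d * #S ^ (n - 1) := by
    rcases n with _ | n
    · simpa [hs.ne'] using hfrac
    · rw [pow_succ, ← mul_assoc] at hfrac
      simpa using le_of_mul_le_mul_right hfrac hs
  exact_mod_cast hc

theorem roots_inject_into_codes (n d q : ℕ) (hq : 1 ≤ q)
    (P : MvPolynomial (Fin n) ℤ) (hdeg : ∀ i : Fin n, P.degreeOf i ≤ d)
    (a : Fin n → ℤ) (ha : eval a P ≠ 0) :
    (∃ f : {b : Fin n → ℤ // (∀ i, 0 ≤ b i ∧ b i < (q : ℤ)) ∧ eval b P = 0} →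
        Fin n × Fin d × (Fin (n - 1) → Fin q), Function.Injective f) ∧
    {b : Fin n → ℤ | (∀ i, 0 ≤ b i ∧ b i < (q : ℤ)) ∧ eval b P = 0}.ncard
      ≤ n * d * q ^ (n - 1) := by
  classical
  set Z := {b : Fin n → ℤ | (∀ i, 0 ≤ b i ∧ b i < (q : ℤ)) ∧ eval b P = 0}
  have hZ : Z = ↑{b ∈ Fintype.piFinset fun _ : Fin n ↦ Finset.Ico (0 : ℤ) q | eval b P = 0} := by
    ext b
    simp [Z, Fintype.mem_piFinset, forall_and]
  have hP : P ≠ 0 := fun h ↦ ha (by rw [h, map_zero])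
  have hcard : Z.ncard ≤ n * d * q ^ (n - 1) := by
    have hgrid : (Finset.Ico (0 : ℤ) q).Nonempty := Finset.nonempty_Ico.2 (by omega)
    rw [hZ, Set.ncard_coe_finset]
    simpa using card_zeros_piFinset_le_of_degreeOf_le hP hdeg hgrid
  refine ⟨?_, hcard⟩
  have : Fintype Z := by rw [hZ]; infer_instance
  have hle : Fintype.card Z ≤ Fintype.card (Fin n × Fin d × (Fin (n - 1) → Fin q)) := by
    rw [← Nat.card_eq_fintype_card, Nat.card_coe_set_eq]
    simpa [mul_assoc] using hcard
  obtain ⟨f⟩ := Function.Embedding.nonempty_of_card_le hle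
  exact ⟨f, f.injective⟩
end

section
/- Let A ∈ Polynomial ℤ with A ≠ 0 and natDegree A ≤ k where k ≥ 1, suppose |A.coeff l| ≤ M for every l, and let v, q ∈ ℤ satisfy 0 ≤ v < q and A.eval v = 0. Then there exists B ∈ Polynomial ℤ with B ≠ 0, natDegree B ≤ k − 1, A = (X − C v) * B, and |B.coeff j| ≤ k · M · q^(k−1) for every j. -/
theorem factor_out_root_with_bounds (k : ℕ) (hk : 1 ≤ k)
    (A : Polynomial ℤ) (hA0 : A ≠ 0) (hAdeg : A.natDegree ≤ k)
    (M : ℤ) (hM : ∀ l, |A.coeff l| ≤ M)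
    (v q : ℤ) (hv0 : 0 ≤ v) (hvq : v < q) (hev : A.eval v = 0) :
    ∃ B : Polynomial ℤ, B ≠ 0 ∧ B.natDegree ≤ k - 1 ∧
      A = (Polynomial.X - Polynomial.C v) * B ∧
      ∀ j, |B.coeff j| ≤ (k : ℤ) * M * q ^ (k - 1) := by
  have hq1 : (1 : ℤ) ≤ q := by omega
  have hM0 : (0 : ℤ) ≤ M := le_trans (abs_nonneg _) (hM 0)
  obtain ⟨B, hB⟩ := Polynomial.dvd_iff_isRoot.mpr hev
  have hB0 : B ≠ 0 := by
    rintro rfl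
    rw [mul_zero] at hB
    exact hA0 hB
  have hdeg : A.natDegree = 1 + B.natDegree := by
    rw [hB, Polynomial.natDegree_mul (Polynomial.X_sub_C_ne_zero v) hB0,
      Polynomial.natDegree_X_sub_C]
  have hBdeg : B.natDegree ≤ k - 1 := by omega
  have hrec : ∀ j, B.coeff j = A.coeff (j + 1) + v * B.coeff (j + 1) := by
    intro j
    have h := congrArg (fun p => Polynomial.coeff p (j + 1)) hB
    simp only [sub_mul, Polynomial.coeff_sub, Polynomial.coeff_X_mul,
      Polynomial.coeff_C_mul] at h
    linarith
  have key : ∀ m j, k ≤ j + m + 1 → |B.coeff j| ≤ ((m : ℤ) + 1) * M * q ^ m := by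
    intro m
    induction m with
    | zero =>
      intro j hj
      have hz : B.coeff (j + 1) = 0 :=
        Polynomial.coeff_eq_zero_of_natDegree_lt (by omega)
      rw [hrec j, hz]
      simpa using hM (j + 1)
    | succ m ih =>
      intro j hj
      have h1 : |B.coeff (j + 1)| ≤ ((m : ℤ) + 1) * M * q ^ m := ih (j + 1) (by omega)
      have hqp : (1 : ℤ) ≤ q ^ (m + 1) := one_le_pow₀ hq1
      rw [hrec j]
      have habs : |v * B.coeff (j + 1)| = |v| * |B.coeff (j + 1)| := abs_mul _ _
      have hvabs : |v| = v := abs_of_nonneg hv0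
      have h2 : |v * B.coeff (j + 1)| ≤ q * (((m : ℤ) + 1) * M * q ^ m) := by
        rw [habs, hvabs]
        exact mul_le_mul (le_of_lt hvq) h1 (abs_nonneg _) (by linarith)
      have h3 : |A.coeff (j + 1) + v * B.coeff (j + 1)| ≤
          |A.coeff (j + 1)| + |v * B.coeff (j + 1)| := abs_add_le _ _
      have h4 : |A.coeff (j + 1)| ≤ M := hM (j + 1)
      have hpow : q * (((m : ℤ) + 1) * M * q ^ m) = ((m : ℤ) + 1) * M * q ^ (m + 1) := by
        ring
      have hMq : M ≤ M * q ^ (m + 1) := le_mul_of_one_le_right hM0 hqp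
      push_cast
      nlinarith [h3, h2, h4, hMq]
  refine ⟨B, hB0, hBdeg, hB, fun j => ?_⟩
  have h := key (k - 1) j (by omega)
  have hcast : ((k - 1 : ℕ) : ℤ) + 1 = (k : ℤ) := by omega
  rwa [hcast] at h
end

section
/- Let n, d, q be natural numbers with n ≥ 1, q ≥ 1 and q ≥ 2·d·n, and let P ∈ MvPolynomial (Fin n) ℤ satisfy degreeOf i P ≤ d for all i. If there exists a : Fin n → ℤ with eval a P ≠ 0, then the number of points b in the grid S_q^n with eval b P = 0 is at most q^n / 2; equivalently, twice the number of roots of P in the grid S_q^n is at most q^n. -/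
/-! By the Schwartz–Zippel lemma in its individual-degree form, a nonzero polynomial vanishes on at
most a fraction `∑ i, degᵢ P / q ≤ d n / q ≤ 1 / 2` of the grid `S_q^n`. -/

open MvPolynomial Finset

theorem MvPolynomial.card_zeros_piFinset_mul_le {R : Type*} [CommRing R] [IsDomain R]
    [DecidableEq R] {n d : ℕ} {p : MvPolynomial (Fin n) R} (hp : p ≠ 0)
    (hdeg : ∀ i, p.degreeOf i ≤ d) (S : Finset R) :
    #{x ∈ Fintype.piFinset fun _ ↦ S | eval x p = 0} * #S ≤ n * d * #S ^ n := by
  rcases S.eq_empty_or_nonempty with rfl | hS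
  · simp
  have hS0 : (#S : ℚ≥0) ≠ 0 := by simpa using hS.ne_empty
  have hsz := schwartz_zippel_sum_degreeOf hp fun _ ↦ S
  have hsum : ∑ i, (p.degreeOf i / #S : ℚ≥0) ≤ n * d / #S := by
    calc ∑ i, (p.degreeOf i / #S : ℚ≥0) ≤ ∑ _i : Fin n, (d / #S : ℚ≥0) := by
          gcongr with i; exact_mod_cast hdeg i
      _ = n * d / #S := by simp [mul_div_assoc]
  rw [prod_const, card_univ, Fintype.card_fin, div_le_iff₀ (by positivity)] at hsz
  have := hsz.trans (mul_le_mul_left hsum _)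
  rw [div_mul_eq_mul_div, le_div_iff₀ (pos_iff_ne_zero.2 hS0)] at this
  exact_mod_cast this

theorem roots_at_most_half_grid_general (n d q : ℕ) (hq : 1 ≤ q)
    (hq2 : 2 * d * n ≤ q)
    (P : MvPolynomial (Fin n) ℤ) (hdeg : ∀ i : Fin n, P.degreeOf i ≤ d)
    (a : Fin n → ℤ) (ha : eval a P ≠ 0) :
    2 * {b : Fin n → ℤ | (∀ i, 0 ≤ b i ∧ b i < (q : ℤ)) ∧ eval b P = 0}.ncard
      ≤ q ^ n := by
  have hP : P ≠ 0 := by rintro rfl; simp at ha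
  have hgrid : {b : Fin n → ℤ | (∀ i, 0 ≤ b i ∧ b i < (q : ℤ)) ∧ eval b P = 0} =
      ↑{b ∈ Fintype.piFinset fun _ : Fin n ↦ Ico (0 : ℤ) q | eval b P = 0} := by
    ext b; simp
  have hsz := P.card_zeros_piFinset_mul_le hP hdeg (Ico (0 : ℤ) q)
  rw [Int.card_Ico, sub_zero, Int.toNat_natCast] at hsz
  rw [hgrid, Set.ncard_coe_finset]
  refine Nat.le_of_mul_le_mul_right ?_ hq
  calc 2 * _ * q = 2 * (_ * q) := by ring
    _ ≤ 2 * (n * d * q ^ n) := by gcongr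
    _ = 2 * d * n * q ^ n := by ring
    _ ≤ q ^ n * q := by rw [mul_comm (q ^ n)]; gcongr

theorem roots_at_most_half_grid (n d q : ℕ) (hn : 1 ≤ n) (hq : 1 ≤ q)
    (hq2 : 2 * d * n ≤ q)
    (P : MvPolynomial (Fin n) ℤ) (hdeg : ∀ i : Fin n, P.degreeOf i ≤ d)
    (a : Fin n → ℤ) (ha : eval a P ≠ 0) :
    2 * {b : Fin n → ℤ | (∀ i, 0 ≤ b i ∧ b i < (q : ℤ)) ∧ eval b P = 0}.ncard
      ≤ q ^ n :=
  roots_at_most_half_grid_general n d q hq hq2 P hdeg a ha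
end

section
/- Let n, d, q, r, m be natural numbers with n ≥ 1, q ≥ 1, q ≥ 2·d·n, and r ≥ m + 1 + n · (Nat.size q). Let 𝒞 be a finite set of polynomials in MvPolynomial (Fin n) ℤ with |𝒞| ≤ 2^m, each with degreeOf i P ≤ d for all i. Then there exists an r-tuple H = (h_1,…,h_r) of points of the grid S_q^n that is a hitting set for 𝒞 over S_q: for every P ∈ 𝒞, if eval a P ≠ 0 for some a : Fin n → ℤ, then eval (h_i) P ≠ 0 for some i ∈ [r]. -/
/-!
By Schwartz–Zippel, a nonzero `P` with individual degrees at most `d` vanishes on at most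
`n d / q ≤ 1/2` of the grid `S_q^n`. Hence for each such `P` at most a `2^{-r}` fraction of the
`r`-tuples of grid points consists of zeros of `P` only, and since `|𝒞| ≤ 2^m < 2^r` some tuple
is not of this kind for any `P ∈ 𝒞`.
-/

open MvPolynomial Finset

theorem MvPolynomial.two_mul_card_zeros_le {R : Type*} [CommRing R] [IsDomain R] [DecidableEq R]
    {n d : ℕ} {p : MvPolynomial (Fin n) R} (hp : p ≠ 0) (hdeg : ∀ i, p.degreeOf i ≤ d)
    (S : Finset R) (hS : 2 * d * n ≤ #S) :
    2 * #{x ∈ Fintype.piFinset fun _ ↦ S | eval x p = 0} ≤ #S ^ n := by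
  set Z := {x ∈ Fintype.piFinset fun _ : Fin n ↦ S | eval x p = 0}
  obtain hgrid | hgrid := (#S ^ n).eq_zero_or_pos
  · have : #Z ≤ #S ^ n := (card_filter_le _ _).trans_eq (by simp)
    omega
  have hsz := schwartz_zippel_sum_degreeOf hp fun _ ↦ S
  simp only [prod_const, card_univ, Fintype.card_fin] at hsz
  rw [div_le_iff₀ (by exact_mod_cast hgrid)] at hsz
  have hdeg_sum : ∑ i, (p.degreeOf i / #S : ℚ≥0) ≤ n * d / #S := calc
    ∑ i, (p.degreeOf i / #S : ℚ≥0) ≤ ∑ _i : Fin n, (d / #S : ℚ≥0) := by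
      gcongr with i; exact_mod_cast hdeg i
    _ = n * d / #S := by simp [mul_div_assoc]
  have hS' : (2 * d * n : ℚ≥0) ≤ #S := by exact_mod_cast hS
  have key : (2 * #Z : ℚ≥0) ≤ #S ^ n := calc
    _ ≤ 2 * (n * d / #S * #S ^ n : ℚ≥0) := by gcongr; exact hsz.trans (by gcongr)
    _ = 2 * d * n / #S * #S ^ n := by ring
    _ ≤ #S ^ n := mul_le_of_le_one_left zero_le (div_le_one_of_le₀ hS' zero_le)
  exact_mod_cast key

theorem Finset.exists_tuple_forall_exists_notMem {α β : Type*} [DecidableEq α] [DecidableEq β]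
    {G : Finset α} (hG : G.Nonempty) {𝒟 : Finset β} {r : ℕ} (hr : #𝒟 < 2 ^ r)
    (Z : β → Finset α) (hZ : ∀ b ∈ 𝒟, 2 * #(Z b) ≤ #G) :
    ∃ h : Fin r → α, (∀ i, h i ∈ G) ∧ ∀ b ∈ 𝒟, ∃ i, h i ∉ Z b := by
  set bad := 𝒟.biUnion fun b ↦ Fintype.piFinset fun _ : Fin r ↦ Z b
  have hbad : 2 ^ r * #bad < 2 ^ r * #G ^ r := calc
    2 ^ r * #bad ≤ ∑ b ∈ 𝒟, 2 ^ r * #(Z b) ^ r := by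
      rw [← mul_sum]
      gcongr
      exact card_biUnion_le.trans_eq (by simp)
    _ ≤ ∑ _b ∈ 𝒟, #G ^ r := sum_le_sum fun b hb ↦ by
      rw [← mul_pow]; exact Nat.pow_le_pow_left (hZ b hb) r
    _ = #𝒟 * #G ^ r := by rw [sum_const, smul_eq_mul]
    _ < 2 ^ r * #G ^ r := by gcongr
  obtain ⟨h, hhG, hgood⟩ := exists_mem_notMem_of_card_lt_card (s := bad)
    (t := Fintype.piFinset fun _ : Fin r ↦ G) (by simpa using lt_of_mul_lt_mul_left' hbad)
  simp only [bad, mem_biUnion, Fintype.mem_piFinset, not_exists, not_and, not_forall] at hgood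
  exact ⟨h, Fintype.mem_piFinset.1 hhG, hgood⟩

theorem hitting_set_exists_general (n d q r m : ℕ) (hq : 1 ≤ q)
    (hq2 : 2 * d * n ≤ q) (hr : m + 1 + n * Nat.size q ≤ r)
    (𝒞 : Finset (MvPolynomial (Fin n) ℤ)) (hcard : 𝒞.card ≤ 2 ^ m)
    (hdeg : ∀ P ∈ 𝒞, ∀ i : Fin n, MvPolynomial.degreeOf i P ≤ d) :
    ∃ H : Fin r → Fin n → ℤ,
      (∀ i j, 0 ≤ H i j ∧ H i j < (q : ℤ)) ∧
      ∀ P ∈ 𝒞, (∃ a : Fin n → ℤ, eval a P ≠ 0) → ∃ i, eval (H i) P ≠ 0 := by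
  classical
  set G := Fintype.piFinset fun _ : Fin n ↦ Ico (0 : ℤ) q
  have hG : G.Nonempty := Fintype.piFinset_nonempty.2 fun _ ↦ nonempty_Ico.2 (by omega)
  have hcard' : #(𝒞.filter (· ≠ 0)) < 2 ^ r := calc
    _ ≤ 2 ^ m := (card_filter_le _ _).trans hcard
    _ < 2 ^ r := Nat.pow_lt_pow_right one_lt_two (by omega)
  obtain ⟨H, hHG, hH⟩ := exists_tuple_forall_exists_notMem hG hcard'
    (fun P ↦ G.filter fun x ↦ eval x P = 0) fun P hP ↦ by
      obtain ⟨hP𝒞, hP0⟩ := mem_filter.1 hP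
      simpa [G] using
        two_mul_card_zeros_le hP0 (hdeg P hP𝒞) (Ico (0 : ℤ) q) (by simpa using hq2)
  refine ⟨H, fun i j ↦ by simpa [G] using Fintype.mem_piFinset.1 (hHG i) j,
    fun P hP ⟨a, ha⟩ ↦ ?_⟩
  obtain ⟨i, hi⟩ := hH P (mem_filter.2 ⟨hP, fun h ↦ ha (by simp [h])⟩)
  exact ⟨i, fun h ↦ hi (mem_filter.2 ⟨hHG i, h⟩)⟩

theorem hitting_set_exists (n d q r m : ℕ) (hn : 1 ≤ n) (hq : 1 ≤ q)
    (hq2 : 2 * d * n ≤ q) (hr : m + 1 + n * Nat.size q ≤ r)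
    (𝒞 : Finset (MvPolynomial (Fin n) ℤ)) (hcard : 𝒞.card ≤ 2 ^ m)
    (hdeg : ∀ P ∈ 𝒞, ∀ i : Fin n, MvPolynomial.degreeOf i P ≤ d) :
    ∃ H : Fin r → Fin n → ℤ,
      (∀ i j, 0 ≤ H i j ∧ H i j < (q : ℤ)) ∧
      ∀ P ∈ 𝒞, (∃ a : Fin n → ℤ, eval a P ≠ 0) → ∃ i, eval (H i) P ≠ 0 :=
  hitting_set_exists_general n d q r m hq hq2 hr 𝒞 hcard hdeg
end

section
/- Let n, r, q be natural numbers with n ≥ 1, r ≥ 1 and q ≥ 1, and let H : Fin r → Fin n → ℤ satisfy 0 ≤ H i j < q for all i, j. Define A_H ∈ MvPolynomial (Fin n) ℤ by A_H = ∏_{i ∈ Fin r} Σ_{j ∈ Fin n} (X_j − C (H i j))². Then: (1) eval (H i) A_H = 0 for every i ∈ Fin r; and (2) evaluating A_H at the constant point b with b j = q for all j gives a strictly positive integer, so in particular A_H ≠ 0 and there exists a : Fin n → ℤ with eval a A_H ≠ 0. Consequently no r-tuple H of points of the grid S_q^n is a hitting set over S_q for any family of polynomials containing A_H. -/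
open MvPolynomial

theorem vanishing_circuit_defeats_tuple (n r q : ℕ) (hn : 1 ≤ n) (hr : 1 ≤ r)
    (hq : 1 ≤ q)
    (H : Fin r → Fin n → ℤ) (hH : ∀ i j, 0 ≤ H i j ∧ H i j < (q : ℤ))
    (A : MvPolynomial (Fin n) ℤ)
    (hA : A = ∏ i : Fin r, ∑ j : Fin n, (X j - C (H i j)) ^ 2) :
    (∀ i, eval (H i) A = 0) ∧
    0 < eval (fun _ : Fin n => (q : ℤ)) A ∧
    A ≠ 0 ∧ (∃ a : Fin n → ℤ, eval a A ≠ 0) ∧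
    ∀ 𝒞 : Set (MvPolynomial (Fin n) ℤ), A ∈ 𝒞 →
      ¬ (∀ P ∈ 𝒞, (∃ a : Fin n → ℤ, eval a P ≠ 0) → ∃ i, eval (H i) P ≠ 0) := by
  have hvanish : ∀ i, eval (H i) A = 0 := by
    intro i
    subst hA
    rw [map_prod]
    apply Finset.prod_eq_zero (Finset.mem_univ i)
    rw [map_sum]
    apply Finset.sum_eq_zero
    intro j _
    simp
  have hpos : 0 < eval (fun _ : Fin n => (q : ℤ)) A := by
    subst hA
    rw [map_prod]
    apply Finset.prod_pos
    intro i _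
    rw [map_sum]
    refine Finset.sum_pos' (fun j _ => by simp only [map_pow, map_sub, eval_X, eval_C]; positivity) ⟨⟨0, hn⟩, Finset.mem_univ _, ?_⟩
    have := hH i ⟨0, hn⟩
    have hlt : 0 < (q : ℤ) - H i ⟨0, hn⟩ := by omega
    simp only [map_pow, map_sub, eval_X, eval_C]
    positivity
  have hexists : ∃ a : Fin n → ℤ, eval a A ≠ 0 :=
    ⟨fun _ => (q : ℤ), by omega⟩
  refine ⟨hvanish, hpos, ?_, hexists, ?_⟩
  · intro h0; rw [h0] at hpos; simp at hpos
  · intro 𝒞 hmem hhit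
    obtain ⟨i, hi⟩ := hhit A hmem hexists
    exact hi (hvanish i)
end

section
/- Fix m : ℕ and g : List Bool → List Bool such that g l has length m + 1 whenever l has length m, and define h : ℕ → List Bool → List Bool by h 0 x = x and h (i+1) x = g ((h i x).take m) ++ (h i x).drop m. Let t ≥ 1 and let y : List Bool have length m + t. If y is not in the image of h t restricted to lists of length m (i.e. h t z ≠ y for every z : List Bool of length m), then there exists y₀ : List Bool of length m + 1 that is not in the image of g restricted to lists of length m (i.e. g w ≠ y₀ for every w : List Bool of length m). -/
theorem amplified_avoider_yields_avoider (m : ℕ) (g : List Bool → List Bool)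
    (hg : ∀ l : List Bool, l.length = m → (g l).length = m + 1)
    (h : ℕ → List Bool → List Bool)
    (h0 : ∀ x, h 0 x = x)
    (hstep : ∀ i x, h (i + 1) x = g ((h i x).take m) ++ (h i x).drop m)
    (t : ℕ) (ht : 1 ≤ t) (y : List Bool) (hy : y.length = m + t)
    (havoid : ∀ z : List Bool, z.length = m → h t z ≠ y) :
    ∃ y₀ : List Bool, y₀.length = m + 1 ∧
      ∀ w : List Bool, w.length = m → g w ≠ y₀ := by
  by_contra hc
  push_neg at hc
  -- surjectivity of g on length m+1 strings
  have gsurj : ∀ y₀ : List Bool, y₀.length = m + 1 → ∃ w, w.length = m ∧ g w = y₀ := by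
    intro y₀ hy₀
    obtain ⟨w, hw, hgw⟩ := hc y₀ hy₀
    exact ⟨w, hw, hgw⟩
  have main : ∀ i (y : List Bool), y.length = m + i → ∃ z, z.length = m ∧ h i z = y := by
    intro i
    induction i with
    | zero => intro y hy; exact ⟨y, by simpa using hy, by rw [h0]⟩
    | succ i ih =>
      intro y hy
      obtain ⟨w, hw, hgw⟩ := gsurj (y.take (m + 1)) (by
        rw [List.length_take]; omega)
      obtain ⟨z, hz, hhz⟩ := ih (w ++ y.drop (m + 1)) (by
        simp [hw, List.length_drop]; omega)
      refine ⟨z, hz, ?_⟩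
      rw [hstep, hhz, List.take_append_of_le_length (by omega),
        List.take_of_length_le (by omega), List.drop_append_of_le_length (by omega),
        List.drop_eq_nil_of_le (by omega), hgw]
      simp [List.take_append_drop]
  obtain ⟨z, hz, hhz⟩ := main t y hy
  exact havoid z hz hhz
end

section
/- Let F be a field, let n, d be natural numbers, let P ∈ MvPolynomial (Fin n) F satisfy degreeOf i P ≤ d for all i, and let S be a finite subset of F. Then the number of points b : Fin n → F with b i ∈ S for all i and eval b P = 0 is either equal to |S|^n (when every point of F^n is a root of P) or at most d · n · |S|^(n−1). -/
open MvPolynomial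

private lemma sz_card_filter_prod {α β : Type*} [DecidableEq α] [DecidableEq β]
    (s : Finset α) (t : Finset β) (χ : α → β → Prop) [∀ a b, Decidable (χ a b)] :
    ((s ×ˢ t).filter fun p => χ p.1 p.2).card
      = ∑ b ∈ t, (s.filter fun a => χ a b).card := by
  rw [Finset.card_filter, Finset.sum_product_right]
  refine Finset.sum_congr rfl fun b _ => ?_
  rw [Finset.card_filter]

private lemma sz_card_filter_piFinset_succ {F : Type*} [DecidableEq F] {n : ℕ}
    (S : Finset F) (χ : F → (Fin n → F) → Prop) [∀ y s, Decidable (χ y s)] :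
    ((Fintype.piFinset fun _ : Fin (n+1) => S).filter fun b => χ (b 0) (Fin.tail b)).card
      = ∑ s ∈ Fintype.piFinset (fun _ : Fin n => S), (S.filter fun y => χ y s).card := by
  rw [← sz_card_filter_prod]
  have hmap : ((Fintype.piFinset fun _ : Fin (n+1) => S).filter
      fun b => χ (b 0) (Fin.tail b)).map (Fin.consEquiv fun _ => F).symm.toEmbedding
      = (S ×ˢ Fintype.piFinset fun _ : Fin n => S).filter fun p => χ p.1 p.2 := by
    ext ⟨y, s⟩
    simp only [Finset.mem_map_equiv, Equiv.symm_symm, Fin.consEquiv_apply, Finset.mem_filter,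
      Finset.mem_product, Fin.cons_zero, Fin.tail_cons, Fintype.mem_piFinset,
      Fin.forall_fin_succ, Fin.cons_succ]
    tauto
  rw [← hmap, Finset.card_map]

private lemma sz_main {F : Type*} [Field F] [DecidableEq F] (d : ℕ) :
    ∀ (n : ℕ) (P : MvPolynomial (Fin n) F), P ≠ 0 → (∀ i : Fin n, P.degreeOf i ≤ d) →
    ∀ S : Finset F,
    ((Fintype.piFinset fun _ : Fin n => S).filter
        (fun b => eval b P = 0)).card ≤ d * n * S.card ^ (n - 1) := by
  intro n
  induction n with
  | zero =>
    intro P hP _ S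
    obtain ⟨c, rfl⟩ := MvPolynomial.C_surjective (Fin 0) P
    have hc : c ≠ 0 := fun h => hP (by simp [h])
    have h0 : ((Fintype.piFinset fun _ : Fin 0 => S).filter
        (fun b => eval b (C c : MvPolynomial (Fin 0) F) = 0)).card = 0 := by
      rw [Finset.card_eq_zero, Finset.filter_eq_empty_iff]
      intro b _
      simp [hc]
    rw [h0]
    exact Nat.zero_le _
  | succ n ih =>
    intro P hP hdeg S
    set Q := MvPolynomial.finSuccEquiv F n P with hQdef
    have hQ : Q ≠ 0 := by
      intro h
      apply hP
      have := (MvPolynomial.finSuccEquiv F n).injective (a₁ := P) (a₂ := 0)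
      simp only [map_zero] at this
      exact this h
    set c := Q.leadingCoeff with hcdef
    have hc : c ≠ 0 := Polynomial.leadingCoeff_ne_zero.mpr hQ
    have hcdeg : ∀ j : Fin n, MvPolynomial.degreeOf j c ≤ d := fun j =>
      (MvPolynomial.degreeOf_coeff_finSuccEquiv P j Q.natDegree).trans (hdeg j.succ)
    have hQd : Q.natDegree ≤ d := by
      rw [hQdef, MvPolynomial.natDegree_finSuccEquiv]; exact hdeg 0
    have hb : ∀ b : Fin (n+1) → F,
        eval b P = Polynomial.eval (b 0) (Q.map (eval (Fin.tail b))) := by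
      intro b
      conv_lhs => rw [← Fin.cons_self_tail b]
      rw [MvPolynomial.eval_eq_eval_mv_eval']
    set T := Fintype.piFinset fun _ : Fin (n+1) => S with hT
    set A := T.filter (fun b => eval (Fin.tail b) c = 0) with hA
    set B := T.filter (fun b => eval (Fin.tail b) c ≠ 0 ∧ eval b P = 0) with hB
    have hsub : T.filter (fun b => eval b P = 0) ⊆ A ∪ B := by
      intro b hbmem
      rw [Finset.mem_filter] at hbmem
      by_cases h : eval (Fin.tail b) c = 0
      · exact Finset.mem_union_left _ (Finset.mem_filter.mpr ⟨hbmem.1, h⟩)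
      · exact Finset.mem_union_right _ (Finset.mem_filter.mpr ⟨hbmem.1, h, hbmem.2⟩)
    have hAcard : A.card ≤ d * n * S.card ^ n := by
      have := Finset.card_consEquiv_filter_piFinset (fun _ : Fin (n+1) => S)
        (fun s => eval s c = 0)
      rw [hA, hT, this]
      calc S.card * ((Fintype.piFinset fun _ : Fin n => S).filter
            (fun s => eval s c = 0)).card
          ≤ S.card * (d * n * S.card ^ (n - 1)) := by
            exact Nat.mul_le_mul_left _ (ih c hc hcdeg S)
        _ ≤ d * n * S.card ^ n := by
            cases n with
            | zero => simp
            | succ m =>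
              rw [Nat.succ_sub_one, pow_succ]
              ring_nf
              exact le_rfl
    have hBcard : B.card ≤ d * S.card ^ n := by
      have hBeq : B = T.filter (fun b =>
          eval (Fin.tail b) c ≠ 0 ∧ Polynomial.eval (b 0) (Q.map (eval (Fin.tail b))) = 0) := by
        apply Finset.filter_congr
        intro b _
        rw [hb b]
      rw [hBeq, hT]
      rw [sz_card_filter_piFinset_succ S
        (fun y s => eval s c ≠ 0 ∧ Polynomial.eval y (Q.map (eval s)) = 0)]
      calc ∑ s ∈ Fintype.piFinset (fun _ : Fin n => S),
            (S.filter fun y => eval s c ≠ 0 ∧ Polynomial.eval y (Q.map (eval s)) = 0).card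
          ≤ ∑ _s ∈ Fintype.piFinset (fun _ : Fin n => S), d := by
            apply Finset.sum_le_sum
            intro s _
            by_cases hcs : eval s c = 0
            · simp [hcs]
            · set p := Q.map (eval s) with hpdef
              have hp : p ≠ 0 := by
                intro h
                apply hcs
                have : p.coeff Q.natDegree = eval s c := by
                  rw [hpdef, Polynomial.coeff_map]; rfl
                rw [h] at this
                simpa using this.symm
              have hsubr : (S.filter fun y => eval s c ≠ 0 ∧ Polynomial.eval y p = 0)
                  ⊆ p.roots.toFinset := by
                intro y hy
                rw [Finset.mem_filter] at hy
                rw [Multiset.mem_toFinset, Polynomial.mem_roots hp]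
                exact hy.2.2
              calc (S.filter fun y => eval s c ≠ 0 ∧ Polynomial.eval y p = 0).card
                  ≤ p.roots.toFinset.card := Finset.card_le_card hsubr
                _ ≤ Multiset.card p.roots := Multiset.toFinset_card_le _
                _ ≤ p.natDegree := Polynomial.card_roots' p
                _ ≤ Q.natDegree := Polynomial.natDegree_map_le
                _ ≤ d := hQd
        _ = S.card ^ n * d := by
            rw [Finset.sum_const, smul_eq_mul, Fintype.card_piFinset]
            simp
        _ = d * S.card ^ n := Nat.mul_comm _ _
    calc (T.filter (fun b => eval b P = 0)).card
        ≤ (A ∪ B).card := Finset.card_le_card hsub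
      _ ≤ A.card + B.card := Finset.card_union_le _ _
      _ ≤ d * n * S.card ^ n + d * S.card ^ n := Nat.add_le_add hAcard hBcard
      _ = d * (n + 1) * S.card ^ ((n + 1) - 1) := by simp only [Nat.add_sub_cancel]; ring

theorem schwartz_zippel_dichotomy
    (F : Type*) [Field F] [DecidableEq F] (n d : ℕ)
    (P : MvPolynomial (Fin n) F) (hdeg : ∀ i : Fin n, P.degreeOf i ≤ d)
    (S : Finset F) :
    ((Fintype.piFinset fun _ : Fin n => S).filter
        (fun b => eval b P = 0)).card = S.card ^ n ∨
    ((Fintype.piFinset fun _ : Fin n => S).filter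
        (fun b => eval b P = 0)).card ≤ d * n * S.card ^ (n - 1) := by
  by_cases hP : P = 0
  · left
    subst hP
    simp [Finset.filter_true_of_mem, Fintype.card_piFinset]
  · right
    exact sz_main d n P hP hdeg S
end
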